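/- arXiv:math/9706204 — 8 statements merged into one kernel-verified Lean document; each statement's English description precedes it below -/
import Mathlib

section
/- For every n ≥ 1, the undirected graph on 2^n whose edges are the crucial pairs is connected; consequently any two u, v ∈ 2^n are joined by a chain of crucial pairs. -/
/-- `⟨u,v⟩` is a crucial pair: `u = 1^k⌢0⌢w` and `v = 0^k⌢1⌢w`. -/
def crucial (u v : List Bool) : Prop :=
  ∃ k w, u = List.replicate k true ++ false :: w ∧
         v = List.replicate k false ++ true :: w

/-- Value of a binary string, first bit least significant. -/
def bval : List Bool → ℕ
  | [] => 0
  | b :: l => (cond b 1 0) + 2 * bval l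

lemma bval_lt (u : List Bool) : bval u < 2 ^ u.length := by
  induction u with
  | nil => simp [bval]
  | cons b l ih =>
    have : cond b 1 0 ≤ 1 := by cases b <;> simp
    simp only [bval, List.length_cons, pow_succ]
    omega

lemma bval_rep_true (k : ℕ) (rest : List Bool) :
    bval (List.replicate k true ++ rest) + 1 = 2 ^ k * (bval rest + 1) := by
  induction k with
  | zero => simp
  | succ k ih =>
    simp only [List.replicate_succ, List.cons_append, bval, cond_true, pow_succ, List.append_eq]
    rw [show 2 ^ k * 2 * (bval rest + 1) = 2 * (2 ^ k * (bval rest + 1)) by ring, ← ih]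
    ring

lemma bval_rep_false (k : ℕ) (rest : List Bool) :
    bval (List.replicate k false ++ rest) = 2 ^ k * bval rest := by
  induction k with
  | zero => simp
  | succ k ih =>
    simp only [List.replicate_succ, List.cons_append, bval, cond_false, pow_succ, List.append_eq]
    rw [ih]; ring

lemma decomp (u : List Bool) :
    u = List.replicate u.length true ∨
      ∃ k w, u = List.replicate k true ++ false :: w := by
  induction u with
  | nil => left; rfl
  | cons b l ih =>
    cases b with
    | false => right; exact ⟨0, l, rfl⟩
    | true =>
      rcases ih with h | ⟨k, w, h⟩
      · left; rw [List.length_cons, List.replicate_succ]; exact congrArg _ h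
      · right; exact ⟨k + 1, w, by rw [List.replicate_succ, List.cons_append]; exact congrArg _ h⟩

lemma to_top : ∀ m u, 2 ^ u.length - bval u = m →
    Relation.ReflTransGen (fun x y => crucial x y ∨ crucial y x) u
      (List.replicate u.length true) := by
  intro m
  induction m using Nat.strong_induction_on with
  | _ m ih =>
    intro u hm
    rcases decomp u with h | ⟨k, w, h⟩
    · exact h ▸ Relation.ReflTransGen.refl
    · set u' : List Bool := List.replicate k false ++ true :: w with hu'
      have hlen : u'.length = u.length := by simp [hu', h]
      have hval : bval u' = bval u + 1 := by
        rw [hu', h, bval_rep_false, bval_rep_true k (false :: w)]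
        simp only [bval, cond_false, cond_true]
        ring
      have hstep : crucial u u' := ⟨k, w, h, rfl⟩
      have hlt : bval u' < 2 ^ u.length := hlen ▸ bval_lt u'
      have h1 : Relation.ReflTransGen (fun x y => crucial x y ∨ crucial y x) u'
          (List.replicate u'.length true) := by
        refine ih (2 ^ u'.length - bval u') ?_ u' rfl
        rw [hlen]; omega
      rw [hlen] at h1
      exact Relation.ReflTransGen.head (Or.inl hstep) h1

/-- For `n ≥ 1` the graph on `2^n` whose edges are the crucial pairs is
connected: any two binary strings of length `n` are joined by a chain of
crucial pairs. -/
theorem crucial_graph_connected (n : ℕ) (hn : 1 ≤ n) (u v : List Bool)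
    (hu : u.length = n) (hv : v.length = n) :
    Relation.ReflTransGen (fun x y => crucial x y ∨ crucial y x) u v := by
  have hsymm : Symmetric (fun x y => crucial x y ∨ crucial y x) := by
    intro x y h; exact h.symm
  have h1 := to_top _ u rfl
  have h2 := to_top _ v rfl
  rw [hu] at h1; rw [hv] at h2
  exact h1.trans ((@Relation.ReflTransGen.stdSymm _ _ ⟨fun a b h => hsymm h⟩).symm _ _ h2)
end

section
/- For every countable ordinal α there is no strictly increasing ω₁-sequence in 2^α ordered lexicographically; that is, there is no function g : ω₁ → 2^α such that β < γ implies g(β) <lex g(γ). -/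
/-- Strict lexicographical order on `2^α` for a linearly ordered index. -/
def ltLex {ι : Type*} [LinearOrder ι] (u v : ι → Bool) : Prop :=
  ∃ i, (∀ j, j < i → u j = v j) ∧ u i < v i

open Cardinal

universe u v

lemma myCountable (α : Ordinal.{u}) (hα : α < (Cardinal.aleph 1).ord) :
    Countable {γ : Ordinal.{u} // γ < α} := by
  have h1 : #(Set.Iio α) = Cardinal.lift.{u+1} α.card := Ordinal.mk_Iio_ordinal α
  have h2 : α.card < Cardinal.aleph 1 := Cardinal.lt_ord.mp hα
  have h3 : α.card ≤ Cardinal.aleph0 := by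
    rwa [← Cardinal.succ_aleph0, Order.lt_succ_iff] at h2
  rw [← Cardinal.mk_le_aleph0_iff]
  calc #{γ : Ordinal // γ < α} = Cardinal.lift.{u+1} α.card := h1
  _ ≤ Cardinal.lift.{u+1} Cardinal.aleph0 := Cardinal.lift_le.mpr h3
  _ = Cardinal.aleph0 := Cardinal.lift_aleph0

lemma myUncountable : ¬ Countable {β : Ordinal.{u} // β < (Cardinal.aleph 1).ord} := by
  intro h
  have h1 : #(Set.Iio (Cardinal.aleph 1).ord) = Cardinal.lift.{u+1} (Cardinal.aleph 1).ord.card :=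
    Ordinal.mk_Iio_ordinal _
  rw [Cardinal.card_ord] at h1
  have h2 := Cardinal.mk_le_aleph0_iff.mpr h
  rw [show {β : Ordinal.{u} // β < (Cardinal.aleph 1).ord} =
      ↥(Set.Iio ((Cardinal.aleph 1).ord)) from rfl, h1,
    ← Cardinal.lift_aleph0.{u+1, u}] at h2
  exact absurd Cardinal.aleph0_lt_aleph_one (not_lt.mpr (Cardinal.lift_le.mp h2))

lemma myBounded (β : {β : Ordinal.{u} // β < (Cardinal.aleph 1).ord}) :
    (Set.Iic β).Countable := by
  have hsucc : Order.succ β.val < (Cardinal.aleph 1).ord :=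
    (Cardinal.isSuccLimit_ord (Cardinal.aleph0_le_aleph 1)).succ_lt β.prop
  have h : (Set.Iio (Order.succ β.val)).Countable :=
    Set.countable_coe_iff.mp (myCountable _ hsucc)
  have h2 := h.preimage (Subtype.val_injective
    (p := fun b : Ordinal.{u} => b < (Cardinal.aleph 1).ord))
  convert h2 using 1
  ext x
  simp only [Set.mem_Iic, Set.mem_preimage, Set.mem_Iio, Order.lt_succ_iff]
  exact Iff.rfl

lemma myAux (α : Ordinal.{u}) : α < (Cardinal.aleph 1).ord →
    ∀ (g : {β : Ordinal.{v} // β < (Cardinal.aleph 1).ord} →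
        ({γ : Ordinal.{u} // γ < α} → Bool)) (S : Set {β : Ordinal.{v} // β < (Cardinal.aleph 1).ord}),
      ¬ S.Countable → (∀ β γ, β ∈ S → γ ∈ S → β < γ → ltLex (g β) (g γ)) → False := by
  induction α using Ordinal.induction with
  | h α IH =>
  intro hα g S hS hinc
  haveI : Countable {γ : Ordinal.{u} // γ < α} := myCountable α hα
  have hwf : WellFounded ((· < ·) : {β : Ordinal.{v} // β < (Cardinal.aleph 1).ord} →
      {β : Ordinal.{v} // β < (Cardinal.aleph 1).ord} → Prop) := wellFounded_lt
  -- least next element of S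
  have hnext : ∀ β, β ∈ S → ∃ γ, γ ∈ S ∧ β < γ ∧ ∀ δ, δ ∈ S → β < δ → γ ≤ δ := by
    intro β hβ
    have hne : {δ | δ ∈ S ∧ β < δ}.Nonempty := by
      by_contra hempty
      rw [Set.not_nonempty_iff_eq_empty] at hempty
      apply hS
      apply Set.Countable.mono _ (myBounded β)
      intro δ hδ
      by_contra hle
      rw [Set.mem_Iic, not_le] at hle
      exact absurd (show δ ∈ {δ | δ ∈ S ∧ β < δ} from ⟨hδ, hle⟩)
        (by rw [hempty]; exact Set.notMem_empty δ)
    refine ⟨hwf.min _ hne, (hwf.min_mem _ hne).1, (hwf.min_mem _ hne).2, ?_⟩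
    intro δ hδS hβδ
    exact le_of_not_gt (hwf.not_lt_min _ (show δ ∈ {δ | δ ∈ S ∧ β < δ} from ⟨hδS, hβδ⟩))
  choose nxt hnxtS hnxtlt hnxtmin using hnext
  have hdiff : ∀ β (h : β ∈ S), ∃ i, (∀ j, j < i → g β j = g (nxt β h) j) ∧
      g β i = false ∧ g (nxt β h) i = true := by
    intro β h
    obtain ⟨i, hagr, hlt⟩ := hinc β (nxt β h) h (hnxtS β h) (hnxtlt β h)
    rw [Bool.lt_iff] at hlt
    exact ⟨i, hagr, hlt.1, hlt.2⟩
  choose idx hag hfalse htrue using hdiff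
  -- pigeonhole
  have hpig : ∃ i, ¬ {β | ∃ h : β ∈ S, idx β h = i}.Countable := by
    by_contra hall
    push_neg at hall
    apply hS
    have hsub : S ⊆ ⋃ i, {β | ∃ h : β ∈ S, idx β h = i} :=
      fun β hβ => Set.mem_iUnion.mpr ⟨idx β hβ, hβ, rfl⟩
    exact Set.Countable.mono hsub (Set.countable_iUnion hall)
  obtain ⟨i, hS'⟩ := hpig
  -- key claim
  have main : ∀ β γ (hβ : β ∈ S) (hγ : γ ∈ S), idx β hβ = i → idx γ hγ = i → β < γ →
      ∃ j, j < i ∧ (∀ k, k < j → g β k = g γ k) ∧ g β j = false ∧ g γ j = true := by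
    intro β γ hβ hγ hiβ hiγ hβγ
    have hν := hnxtmin β hβ γ hγ hβγ
    rcases eq_or_lt_of_le hν with he | hl
    · exfalso
      have h1 : g γ i = true := by rw [← he, ← hiβ]; exact htrue β hβ
      have h2 : g γ i = false := by rw [← hiγ]; exact hfalse γ hγ
      rw [h1] at h2; exact Bool.noConfusion h2
    · obtain ⟨j, hagj, hltj⟩ := hinc (nxt β hβ) γ (hnxtS β hβ) hγ hl
      rw [Bool.lt_iff] at hltj
      have hji : j < i := by
        rcases lt_trichotomy j i with h | h | h
        · exact h
        · exfalso
          have t := htrue β hβ; rw [hiβ, ← h] at t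
          rw [t] at hltj; exact Bool.noConfusion hltj.1
        · exfalso
          have t := hagj i h
          have t1 := htrue β hβ; rw [hiβ] at t1
          have t2 := hfalse γ hγ; rw [hiγ] at t2
          rw [t1, t2] at t; exact Bool.noConfusion t
      refine ⟨j, hji, ?_, ?_, hltj.2⟩
      · intro k hk
        have e1 := hag β hβ k (by rw [hiβ]; exact hk.trans hji)
        rw [e1, hagj k hk]
      · have e1 := hag β hβ j (by rw [hiβ]; exact hji)
        rw [e1]; exact hltj.1
  -- apply IH to the initial segment below i
  apply IH i.val i.prop (lt_trans i.prop hα)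
    (fun β k => g β ⟨k.val, lt_trans k.prop i.prop⟩) _ hS'
  rintro β γ ⟨hβS, hiβ⟩ ⟨hγS, hiγ⟩ hβγ
  obtain ⟨j, hji, hagk, hf, ht⟩ := main β γ hβS hγS hiβ hiγ hβγ
  have hjval : j.val < i.val := Subtype.coe_lt_coe.mpr hji
  refine ⟨⟨j.val, hjval⟩, ?_, ?_⟩
  · intro k hk
    exact hagk ⟨k.val, lt_trans k.prop i.prop⟩ (Subtype.mk_lt_mk.mpr (Subtype.coe_lt_coe.mpr hk))
  · have hj : (⟨j.val, lt_trans hjval i.prop⟩ : {γ : Ordinal.{u} // γ < α}) = j := Subtype.ext rfl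
    show g β ⟨j.val, _⟩ < g γ ⟨j.val, _⟩
    rw [hj, hf, ht]
    exact Bool.lt_iff.mpr ⟨rfl, rfl⟩

/-- For a countable ordinal `α` there is no strictly `<lex`-increasing
`ω₁`-sequence in `2^α`. -/
theorem no_omega1_increasing_chain_in_lex (α : Ordinal)
    (hα : α < (Cardinal.aleph 1).ord) :
    ¬ ∃ g : {β : Ordinal // β < (Cardinal.aleph 1).ord} →
            ({γ : Ordinal // γ < α} → Bool),
        ∀ β γ, β < γ → ltLex (g β) (g γ) := by
  rintro ⟨g, hg⟩
  apply myAux α hα g Set.univ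
  · rw [Set.countable_univ_iff]
    exact myUncountable
  · exact fun β γ _ _ h => hg β γ h
end

section
/- Let α be an ordinal and X ⊆ 2^α a set with at least two elements such that (X, ≤lex) is order isomorphic to a subset of ℤ. Then there is a maximal u ∈ 2^{<α} (a function on an initial segment of α) with u ⊂ x for all x ∈ X, and if the set X_left = {x ∈ X : u⌢0 ⊂ x} is nonempty then X_left has a ≤lex-largest element. -/
/-- Lexicographical order on `2^α`. -/
def leLex {ι : Type*} [LinearOrder ι] (u v : ι → Bool) : Prop :=
  u = v ∨ ltLex u v

/-- If `X ⊆ 2^α` has at least two elements and `(X, ≤lex)` is order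
isomorphic to a subset of `ℤ`, then there is a maximal initial segment `β`
on which all elements of `X` agree (a maximal `u ∈ 2^{<α}` with `u ⊂ x`
for all `x ∈ X`), and if `X_left = {x ∈ X : u⌢0 ⊂ x}` is nonempty then it
has a `≤lex`-largest element. -/
theorem lex_Z_like_set_left_part_has_max (α : Ordinal)
    (X : Set ({γ : Ordinal // γ < α} → Bool))
    (htwo : ∃ x ∈ X, ∃ y ∈ X, x ≠ y)
    (hiso : ∃ f : X → ℤ, Function.Injective f ∧
        ∀ x y : X, leLex x.1 y.1 ↔ f x ≤ f y) :
    ∃ β : Ordinal, β ≤ α ∧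
      (∀ x ∈ X, ∀ y ∈ X, ∀ γ, ∀ hγ : γ < α, γ < β → x ⟨γ, hγ⟩ = y ⟨γ, hγ⟩) ∧
      (∀ β', β' ≤ α →
        (∀ x ∈ X, ∀ y ∈ X, ∀ γ, ∀ hγ : γ < α, γ < β' → x ⟨γ, hγ⟩ = y ⟨γ, hγ⟩) →
        β' ≤ β) ∧
      (∀ hβ : β < α, (∃ x ∈ X, x ⟨β, hβ⟩ = false) →
        ∃ x ∈ X, x ⟨β, hβ⟩ = false ∧
          ∀ y ∈ X, y ⟨β, hβ⟩ = false → leLex y x) := by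
  obtain ⟨x₀, hx₀, y₀, hy₀, hxy⟩ := htwo
  obtain ⟨f, hfinj, hf⟩ := hiso
  set S : Set Ordinal := {γ | ∃ hγ : γ < α, ∃ x ∈ X, ∃ y ∈ X, x ⟨γ, hγ⟩ ≠ y ⟨γ, hγ⟩} with hS
  have hSne : S.Nonempty := by
    obtain ⟨i, hi⟩ := Function.ne_iff.mp hxy
    exact ⟨i.1, i.2, x₀, hx₀, y₀, hy₀, by simpa using hi⟩
  set β := sInf S with hβdef
  have hβS : β ∈ S := csInf_mem hSne
  obtain ⟨hβα, a, ha, b, hb, hab⟩ := hβS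
  have hagree : ∀ x ∈ X, ∀ y ∈ X, ∀ γ, ∀ hγ : γ < α, γ < β → x ⟨γ, hγ⟩ = y ⟨γ, hγ⟩ := by
    intro x hx y hy γ hγ hγβ
    by_contra h
    exact absurd (csInf_le' (show γ ∈ S from ⟨hγ, x, hx, y, hy, h⟩)) (not_le.mpr hγβ)
  refine ⟨β, hβα.le, hagree, ?_, ?_⟩
  · intro β' hβ' h'
    by_contra hlt
    exact hab (h' a ha b hb β hβα (not_le.mp hlt))
  · rintro hβ ⟨x1, hx1X, hx1⟩
    have htrue : ∃ y ∈ X, y ⟨β, hβ⟩ = true := by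
      rcases Bool.eq_false_or_eq_true (a ⟨β, hβ⟩) with h | h
      · exact ⟨a, ha, h⟩
      · rcases Bool.eq_false_or_eq_true (b ⟨β, hβ⟩) with h2 | h2
        · exact ⟨b, hb, h2⟩
        · exact absurd (h.trans h2.symm) hab
    obtain ⟨y1, hy1X, hy1⟩ := htrue
    have key : ∀ x ∈ X, x ⟨β, hβ⟩ = false → ltLex x y1 := by
      intro x hx hxf
      refine ⟨⟨β, hβ⟩, ?_, ?_⟩
      · intro j hj
        exact hagree x hx y1 hy1X j.1 j.2 hj
      · simp [hxf, hy1]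
    have hbdd : ∃ c : ℤ, ∀ z, (∃ x : X, x.1 ⟨β, hβ⟩ = false ∧ f x = z) → z ≤ c := by
      refine ⟨f ⟨y1, hy1X⟩, ?_⟩
      rintro z ⟨x, hxf, rfl⟩
      exact (hf x ⟨y1, hy1X⟩).mp (Or.inr (key x.1 x.2 hxf))
    have hinh : ∃ z, ∃ x : X, x.1 ⟨β, hβ⟩ = false ∧ f x = z :=
      ⟨f ⟨x1, hx1X⟩, ⟨x1, hx1X⟩, hx1, rfl⟩
    obtain ⟨ub, ⟨x, hxf, hfx⟩, hub⟩ := Int.exists_greatest_of_bdd hbdd hinh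
    refine ⟨x.1, x.2, hxf, ?_⟩
    intro y hy hyf
    have hle := hub (f ⟨y, hy⟩) ⟨⟨y, hy⟩, hyf, rfl⟩
    exact (hf ⟨y, hy⟩ x).mpr (by rw [hfx]; exact hle)
end

section
/- There is no Borel map ψ : 2^ω → 2^ω such that for all a, b ∈ 2^ω, a E₀ b if and only if ψ(a) = ψ(b). (E₀ is not smooth.) -/
/-- Eventual equality on `2^ω`. -/
def E0 (a b : ℕ → Bool) : Prop := ∃ m, ∀ k, k ≥ m → a k = b k

open Topology Filter Set

namespace E0aux

/-- Coordinatewise xor with a fixed `F`. -/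
def flip (F : ℕ → Bool) (a : ℕ → Bool) : ℕ → Bool := fun k => xor (a k) (F k)

lemma xor_xor (b c : Bool) : xor (xor b c) c = b := by cases b <;> cases c <;> rfl

lemma flip_invol (F : ℕ → Bool) : Function.Involutive (flip F) := by
  intro a; funext k; simp [flip, xor_xor]

lemma flip_continuous (F : ℕ → Bool) : Continuous (flip F) :=
  continuous_pi fun k =>
    (continuous_of_discreteTopology (f := fun b : Bool => xor b (F k))).comp (continuous_apply k)

/-- `flip F` as a homeomorphism. -/
def flipHomeo (F : ℕ → Bool) : (ℕ → Bool) ≃ₜ (ℕ → Bool) where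
  toFun := flip F
  invFun := flip F
  left_inv := flip_invol F
  right_inv := flip_invol F
  continuous_toFun := flip_continuous F
  continuous_invFun := flip_continuous F

lemma E0_flip (F : ℕ → Bool) (n : ℕ) (hF : ∀ k, k ≥ n → F k = false) (a : ℕ → Bool) :
    E0 (flip F a) a := by
  refine ⟨n, fun k hk => ?_⟩
  simp [flip, hF k hk]

instance noIsolated (x : ℕ → Bool) : NeBot (𝓝[≠] x) := by
  rw [← mem_closure_iff_nhdsWithin_neBot]
  rw [mem_closure_iff]
  intro o ho hxo
  obtain ⟨I, u, hu, hIu⟩ := isOpen_pi_iff.mp ho x hxo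
  set n : ℕ := I.sup id + 1 with hn
  refine ⟨Function.update x n (!(x n)), hIu fun k hk => ?_, ?_⟩
  · have hkn : k ≠ n := by
      have : k ≤ I.sup id := Finset.le_sup (f := id) hk
      omega
    rw [Function.update_of_ne hkn]
    exact (hu k hk).2
  · intro h
    have := congrFun h n
    rw [Function.update_self] at this
    simp at this

lemma isMeagre_of_countable {s : Set (ℕ → Bool)} (hs : s.Countable) : IsMeagre s := by
  rw [IsMeagre]
  have : sᶜ = ⋂ y ∈ s, {y}ᶜ := by
    ext z
    simp only [Set.mem_compl_iff, Set.mem_iInter, Set.mem_singleton_iff]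
    exact ⟨fun h i hi he => h (he ▸ hi), fun h hz => h z hz rfl⟩
  rw [this]
  refine (countable_bInter_mem hs).mpr fun y _ => ?_
  exact residual_of_dense_open isOpen_compl_singleton (dense_compl_singleton y)

lemma E0_class_countable (a : ℕ → Bool) : {b | E0 a b}.Countable := by
  have : {b | E0 a b} ⊆ ⋃ m : ℕ, Set.range (fun v : Fin m → Bool =>
      (fun k => if h : k < m then v ⟨k, h⟩ else a k : ℕ → Bool)) := by
    rintro b ⟨m, hm⟩
    refine Set.mem_iUnion.mpr ⟨m, ⟨fun i => b i, ?_⟩⟩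
    funext k
    by_cases h : k < m
    · simp [h]
    · simp [h, (hm k (le_of_not_gt h)).symm]
  exact Set.Countable.mono this (countable_iUnion fun m => countable_range _)

/-- Topological zero-one law for `E₀`-invariant Baire measurable sets. -/
theorem zero_one {S : Set (ℕ → Bool)} (hB : BaireMeasurableSet S)
    (hinv : ∀ a b, E0 a b → a ∈ S → b ∈ S) :
    S ∈ residual (ℕ → Bool) ∨ Sᶜ ∈ residual (ℕ → Bool) := by
  obtain ⟨U, hUo, hSU⟩ := hB.residualEq_isOpen
  rcases Set.eq_empty_or_nonempty U with hU | ⟨x, hx⟩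
  · right
    rw [← Filter.eventually_mem_set]
    filter_upwards [hSU] with y hy
    intro hyS
    have : y ∈ U := hy.mp hyS
    simp [hU] at this
  · left
    obtain ⟨I, u, hu, hIu⟩ := isOpen_pi_iff.mp hUo x hx
    set n : ℕ := I.sup id + 1 with hn
    set C : Set (ℕ → Bool) := {y | ∀ k < n, y k = x k} with hC
    have hCU : C ⊆ U := by
      intro y hy
      apply hIu
      intro k hk
      have hk' : k < n := by
        have : k ≤ I.sup id := Finset.le_sup (f := id) hk
        omega
      rw [hy k hk']
      exact (hu k hk).2
    have hmeag : IsMeagre (C \ S) := by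
      have h1 : IsMeagre {y : ℕ → Bool | ¬ (S y = U y)} := by
        simp only [IsMeagre, compl_setOf, not_not]
        exact hSU
      refine h1.mono ?_
      rintro y ⟨hyC, hyS⟩ 
      simp only [mem_setOf_eq]
      intro h
      exact hyS (h.mpr (hCU hyC))
    -- flip maps indexed by the possible initial segments
    set F : (Fin n → Bool) → (ℕ → Bool) :=
      fun v k => if h : k < n then xor (v ⟨k, h⟩) (x k) else false with hFdef
    have hFfar : ∀ v, ∀ k, k ≥ n → F v k = false := by
      intro v k hk
      simp [hFdef, Nat.not_lt.mpr hk]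
    have hcover : Sᶜ ⊆ ⋃ v : Fin n → Bool, flip (F v) ⁻¹' (C \ S) := by
      intro a ha
      set v : Fin n → Bool := fun i => a i with hv
      refine Set.mem_iUnion.mpr ⟨v, ?_, ?_⟩
      · -- flip lands in C
        intro k hk
        simp only [flip, hFdef, dif_pos hk, hv]
        cases a k <;> cases x k <;> rfl
      · -- flip (F v) a ∉ S
        intro hmem
        exact ha (hinv (flip (F v) a) a (E0_flip (F v) n (hFfar v) a) hmem)
    have hmeagU : IsMeagre (⋃ v : Fin n → Bool, flip (F v) ⁻¹' (C \ S)) := by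
      rw [IsMeagre, Set.compl_iUnion]
      refine (countable_iInter_mem).mpr fun v => ?_
      have : IsMeagre (flip (F v) ⁻¹' (C \ S)) :=
        hmeag.preimage_of_isOpenMap (flip_continuous (F v)) (flipHomeo (F v)).isOpenMap
      exact this
    have : IsMeagre Sᶜ := hmeagU.mono hcover
    rw [IsMeagre, compl_compl] at this
    exact this

end E0aux

open E0aux in
/-- `E₀` is not smooth: no Borel map reduces `E₀` to equality. -/
theorem E0_not_smooth :
    ¬ ∃ ψ : (ℕ → Bool) → (ℕ → Bool),
        Measurable ψ ∧ ∀ a b, E0 a b ↔ ψ a = ψ b := by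
  rintro ⟨ψ, hψ, hiff⟩
  have key : ∀ n : ℕ, ∃ G ∈ residual (ℕ → Bool), ∀ a ∈ G, ∀ b ∈ G, ψ a n = ψ b n := by
    intro n
    set S : Set (ℕ → Bool) := (fun a => ψ a n) ⁻¹' {true} with hS
    have hmS : MeasurableSet S :=
      ((measurable_pi_apply n).comp hψ) (measurableSet_singleton true)
    have hinv : ∀ a b, E0 a b → a ∈ S → b ∈ S := by
      intro a b hab ha
      simp only [hS, Set.mem_preimage, Set.mem_singleton_iff] at *
      rw [← (hiff a b).mp hab]
      exact ha
    rcases zero_one hmS.baireMeasurableSet hinv with h | h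
    · refine ⟨S, h, fun a ha b hb => ?_⟩
      have ha' : ψ a n = true := ha
      have hb' : ψ b n = true := hb
      rw [ha', hb']
    · refine ⟨Sᶜ, h, fun a ha b hb => ?_⟩
      simp only [hS, Set.mem_compl_iff, Set.mem_preimage, Set.mem_singleton_iff,
        Bool.not_eq_true] at ha hb
      rw [ha, hb]
  choose G hG hGc using key
  have hGr : (⋂ n, G n) ∈ residual (ℕ → Bool) := (countable_iInter_mem).mpr hG
  obtain ⟨a, ha⟩ : (⋂ n, G n).Nonempty := (dense_of_mem_residual hGr).nonempty
  have hclass : IsMeagre {b | E0 a b} := isMeagre_of_countable (E0_class_countable a)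
  have h2 : ((⋂ n, G n) ∩ {b | E0 a b}ᶜ) ∈ residual (ℕ → Bool) :=
    Filter.inter_mem hGr hclass
  obtain ⟨b, hb1, hb2⟩ : ((⋂ n, G n) ∩ {b | E0 a b}ᶜ).Nonempty :=
    (dense_of_mem_residual h2).nonempty
  have hab : ψ a = ψ b := by
    funext n
    exact hGc n a (Set.mem_iInter.mp ha n) b (Set.mem_iInter.mp hb1 n)
  exact hb2 ((hiff a b).mpr hab)
end

section
/- The partial order ≤₀ on 2^ω is not Borel linearizable: there is no linear quasi-order ≤' on 2^ω given by a Borel relation together with the identity map, or equivalently, there is no Borel map h from 2^ω to a standard Borel space Y equipped with a Borel linear order ≤_Y such that a ≤₀ b implies h(a) ≤_Y h(b) and h(a) = h(b) iff a = b or (a ≤₀ b and b ≤₀ a). Concretely: any Borel map h : 2^ω → Y with (a ≤₀ b → h(a) ≤_Y h(b)) and (h(a) = h(b) → a E₀ b) would yield a Borel reduction of E₀ to equality, which is impossible. -/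
/-- The anti-lexicographical relation `≤₀` on `2^ω`. -/
def le0 (a b : ℕ → Bool) : Prop :=
  a = b ∨ ∃ m, (∀ k, k > m → a k = b k) ∧ a m < b m

namespace Le0NotLin

open Topology Filter Set

/-- The Cantor space `2^ω`. -/
abbrev X := ℕ → Bool

/-- The square of Cantor space. -/
abbrev Z := X × X

/-- The basic clopen cylinder determined by the first `n` values of `p`. -/
def cyl (p : X) (n : ℕ) : Set X := {b | ∀ k, k < n → b k = p k}

lemma self_mem_cyl (p : X) (n : ℕ) : p ∈ cyl p n := fun _ _ => rfl

lemma isOpen_cyl (p : X) (n : ℕ) : IsOpen (cyl p n) := by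
  have : cyl p n = ⋂ k ∈ Finset.range n, (fun b : X => b k) ⁻¹' {p k} := by
    ext b
    simp [cyl]
  rw [this]
  exact isOpen_biInter_finset fun k _ =>
    (isOpen_discrete ({p k} : Set Bool)).preimage (continuous_apply k)

lemma cyl_subset {p p' : X} {n m : ℕ} (hnm : n ≤ m) (hag : ∀ k, k < n → p' k = p k) :
    cyl p' m ⊆ cyl p n := by
  intro b hb k hk
  rw [hb k (lt_of_lt_of_le hk hnm), hag k hk]

/-- Every neighborhood of a point contains a cylinder around it. -/
lemma exists_cyl_subset {U : Set X} (hU : IsOpen U) {b : X} (hb : b ∈ U) :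
    ∃ n, cyl b n ⊆ U := by
  have h1 : U ∈ nhds b := hU.mem_nhds hb
  rw [nhds_pi] at h1
  obtain ⟨I, hI, V, hV, hsub⟩ := Filter.mem_pi.mp h1
  obtain ⟨N, hN⟩ := hI.bddAbove
  refine ⟨N + 1, fun x hx => hsub ?_⟩
  intro i hi
  have : x i = b i := hx i (Nat.lt_succ_of_le (hN hi))
  rw [this]
  exact mem_of_mem_nhds (hV i)

/-- Every nonempty open set in the square contains a basic box. -/
lemma exists_box_subset {U : Set Z} (hU : IsOpen U) {z : Z} (hz : z ∈ U) :
    ∃ n, cyl z.1 n ×ˢ cyl z.2 n ⊆ U := by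
  obtain ⟨u, v, hu, hv, h1, h2, huv⟩ := isOpen_prod_iff.mp hU z.1 z.2 hz
  obtain ⟨n1, hn1⟩ := exists_cyl_subset hu h1
  obtain ⟨n2, hn2⟩ := exists_cyl_subset hv h2
  refine ⟨max n1 n2, ?_⟩
  refine Subset.trans (Set.prod_mono ?_ ?_) huv
  · exact Subset.trans (cyl_subset (le_max_left _ _) fun k _ => rfl) hn1
  · exact Subset.trans (cyl_subset (le_max_right _ _) fun k _ => rfl) hn2

/-- Coordinatewise XOR with a fixed element, as a homeomorphism of Cantor space. -/
def xorHomeo (u : X) : X ≃ₜ X where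
  toFun b := fun k => xor (u k) (b k)
  invFun b := fun k => xor (u k) (b k)
  left_inv b := by
    funext k
    show xor (u k) (xor (u k) (b k)) = b k
    cases u k <;> cases b k <;> rfl
  right_inv b := by
    funext k
    show xor (u k) (xor (u k) (b k)) = b k
    cases u k <;> cases b k <;> rfl
  continuous_toFun := continuous_pi fun k =>
    (continuous_of_discreteTopology (f := fun v => xor (u k) v)).comp (continuous_apply k)
  continuous_invFun := continuous_pi fun k =>
    (continuous_of_discreteTopology (f := fun v => xor (u k) v)).comp (continuous_apply k)

/-- The set of `E₀`-equivalent pairs is meager in the square. -/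
lemma isMeagre_E0pairs : IsMeagre {z : Z | E0 z.1 z.2} := by
  have hrw : {z : Z | E0 z.1 z.2} = ⋃ m, {z : Z | ∀ k, m ≤ k → z.1 k = z.2 k} := by
    ext z
    simp [E0, ge_iff_le]
  rw [hrw]
  apply isMeagre_iUnion
  intro m
  set K : Set Z := {z : Z | ∀ k, m ≤ k → z.1 k = z.2 k} with hK
  have hclosed : IsClosed K := by
    have : K = ⋂ k, {z : Z | m ≤ k → z.1 k = z.2 k} := by
      ext z; simp [hK]
    rw [this]
    refine isClosed_iInter fun k => ?_
    by_cases hmk : m ≤ k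
    · have : {z : Z | m ≤ k → z.1 k = z.2 k} = {z : Z | z.1 k = z.2 k} := by
        ext z; simp [hmk]
      rw [this]
      exact isClosed_eq ((continuous_apply k).comp continuous_fst)
        ((continuous_apply k).comp continuous_snd)
    · have : {z : Z | m ≤ k → z.1 k = z.2 k} = univ := by
        ext z; simp [hmk]
      rw [this]
      exact isClosed_univ
  -- K has empty interior, hence its complement is dense open.
  have hdense : Dense Kᶜ := by
    rw [dense_iff_inter_open]
    rintro U hU ⟨z, hzU⟩
    by_cases hzK : z ∈ K
    · obtain ⟨n, hbox⟩ := exists_box_subset hU hzU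
      set M := max n m with hM
      set b' : X := fun k => if k = M then !(z.2 M) else z.1 k with hb'
      refine ⟨(b', z.2), ?_, ?_⟩
      · apply hbox
        constructor
        · intro k hk
          have hkM : k ≠ M := by
            intro hkeq
            rw [hkeq] at hk
            exact absurd (le_max_left n m) (not_le.mpr hk)
          simp [hb', hkM]
        · exact self_mem_cyl _ _
      · intro hmem
        have h1 := hmem M (le_max_right n m)
        simp only [hb', if_pos rfl] at h1
        exact (Bool.not_ne_self (z.2 M)) h1
    · exact ⟨z, hzU, hzK⟩
  have : Kᶜ ∈ residual Z := residual_of_dense_open hclosed.isOpen_compl hdense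
  exact this

/-- Union of two meager sets is meager. -/
lemma IsMeagre.union' {s t : Set Z} (hs : IsMeagre s) (ht : IsMeagre t) :
    IsMeagre (s ∪ t) := by
  rw [IsMeagre, compl_union]
  exact inter_mem hs ht

/-- Transfer of relative comeagerness in the first coordinate:
if `R` is downward closed in the first coordinate with respect to `le0`, and `R` is
comeager in a box whose first cylinder has top bit `true`, then `R` is comeager in the
corresponding box with the first cylinder replaced by any cylinder with top bit `false`. -/
lemma transfer_fst {R : Set Z}
    (hdc : ∀ b b' x, le0 b' b → (b, x) ∈ R → (b', x) ∈ R)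
    {p q : X} {N : ℕ} (hp : p N = true) (hq : q N = false) {V : Set X}
    (hm : IsMeagre ((cyl p (N + 1) ×ˢ V) \ R)) :
    IsMeagre ((cyl q (N + 1) ×ˢ V) \ R) := by
  classical
  set u : X := fun k => if k < N + 1 then xor (p k) (q k) else false with hu
  set e : Z ≃ₜ Z := (xorHomeo u).prodCongr (Homeomorph.refl X) with he
  have key : (cyl q (N + 1) ×ˢ V) \ R ⊆ e ⁻¹' ((cyl p (N + 1) ×ˢ V) \ R) := by
    rintro ⟨b, x⟩ ⟨⟨hbq, hxV⟩, hnR⟩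
    have hb_eq_hi : ∀ k, N + 1 ≤ k → (xorHomeo u) b k = b k := by
      intro k hk
      have : u k = false := by simp [hu, Nat.not_lt.mpr hk]; intro h; omega
      show xor (u k) (b k) = b k
      rw [this]
      cases b k <;> rfl
    have hb_eq_lo : ∀ k, k < N + 1 → (xorHomeo u) b k = p k := by
      intro k hk
      have hbk : b k = q k := hbq k hk
      show xor (u k) (b k) = p k
      rw [hu]
      simp only [if_pos hk, hbk]
      cases p k <;> cases q k <;> rfl
    have hle : le0 b ((xorHomeo u) b) := by
      refine Or.inr ⟨N, fun k hk => (hb_eq_hi k hk).symm, ?_⟩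
      rw [hb_eq_lo N (Nat.lt_succ_self N), show b N = q N from hbq N (Nat.lt_succ_self N), hp, hq]
      exact Bool.false_lt_true
    refine ⟨⟨fun k hk => hb_eq_lo k hk, hxV⟩, ?_⟩
    intro hR
    exact hnR (hdc ((xorHomeo u) b) b x hle hR)
  exact (hm.preimage_of_isOpenMap e.continuous e.isOpenMap).mono key

/-- Transfer of relative comeagerness in the second coordinate. -/
lemma transfer_snd {R : Set Z}
    (hdc : ∀ b x x', le0 x' x → (b, x) ∈ R → (b, x') ∈ R)
    {p q : X} {N : ℕ} (hp : p N = true) (hq : q N = false) {V : Set X}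
    (hm : IsMeagre ((V ×ˢ cyl p (N + 1)) \ R)) :
    IsMeagre ((V ×ˢ cyl q (N + 1)) \ R) := by
  classical
  set u : X := fun k => if k < N + 1 then xor (p k) (q k) else false with hu
  set e : Z ≃ₜ Z := (Homeomorph.refl X).prodCongr (xorHomeo u) with he
  have key : (V ×ˢ cyl q (N + 1)) \ R ⊆ e ⁻¹' ((V ×ˢ cyl p (N + 1)) \ R) := by
    rintro ⟨b, x⟩ ⟨⟨hbV, hxq⟩, hnR⟩
    have hx_eq_hi : ∀ k, N + 1 ≤ k → (xorHomeo u) x k = x k := by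
      intro k hk
      have : u k = false := by simp [hu, Nat.not_lt.mpr hk]; intro h; omega
      show xor (u k) (x k) = x k
      rw [this]
      cases x k <;> rfl
    have hx_eq_lo : ∀ k, k < N + 1 → (xorHomeo u) x k = p k := by
      intro k hk
      have hxk : x k = q k := hxq k hk
      show xor (u k) (x k) = p k
      rw [hu]
      simp only [if_pos hk, hxk]
      cases p k <;> cases q k <;> rfl
    have hle : le0 x ((xorHomeo u) x) := by
      refine Or.inr ⟨N, fun k hk => (hx_eq_hi k hk).symm, ?_⟩
      rw [hx_eq_lo N (Nat.lt_succ_self N), show x N = q N from hxq N (Nat.lt_succ_self N), hp, hq]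
      exact Bool.false_lt_true
    refine ⟨⟨hbV, fun k hk => hx_eq_lo k hk⟩, ?_⟩
    intro hR
    exact hnR (hdc b ((xorHomeo u) x) x hle hR)
  exact (hm.preimage_of_isOpenMap e.continuous e.isOpenMap).mono key

/-- A non-meager Baire measurable set is comeager in some basic box. -/
lemma exists_box_comeager {R : Set Z} (hR : BaireMeasurableSet R) (hnm : ¬IsMeagre R) :
    ∃ t s n, IsMeagre ((cyl t n ×ˢ cyl s n) \ R) := by
  obtain ⟨U, hUo, hUeq⟩ := hR.residualEq_isOpen
  have hE : {z : Z | z ∈ R ↔ z ∈ U} ∈ residual Z := Filter.eventuallyEq_set.mp hUeq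
  have hmE : IsMeagre {z : Z | ¬(z ∈ R ↔ z ∈ U)} := by
    rw [IsMeagre]
    convert hE using 1
    ext z
    simp
  have hUne : U.Nonempty := by
    rcases Set.eq_empty_or_nonempty U with hemp | hne
    · exfalso
      apply hnm
      apply hmE.mono
      intro z hz
      simp only [Set.mem_setOf_eq]
      intro hiff
      rw [hemp] at hiff
      exact (hiff.mp hz)
    · exact hne
  obtain ⟨z, hzU⟩ := hUne
  obtain ⟨n, hbox⟩ := exists_box_subset hUo hzU
  refine ⟨z.1, z.2, n, ?_⟩
  apply hmE.mono
  rintro w ⟨hwbox, hwR⟩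
  simp only [Set.mem_setOf_eq]
  intro hiff
  exact hwR (hiff.mpr (hbox hwbox))

end Le0NotLin

open Le0NotLin Topology Filter Set in
/-- `≤₀` is not Borel linearizable: there is no Borel map `h` into a
standard Borel space with a Borel linear order which is half order
preserving on `≤₀` and whose fibers are contained in `E₀`-classes. -/
theorem le0_not_Borel_linearizable (Y : Type) [MeasurableSpace Y]
    [StandardBorelSpace Y] [LinearOrder Y]
    (hBorelOrder : MeasurableSet {p : Y × Y | p.1 ≤ p.2})
    (h : (ℕ → Bool) → Y) (hmeas : Measurable h)
    (hhop : ∀ a b, le0 a b → h a ≤ h b)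
    (hfib : ∀ a b, h a = h b → E0 a b) : False := by
  classical
  set R : Set Z := {z : Z | h z.1 ≤ h z.2} with hRdef
  set S : Set Z := {z : Z | h z.2 ≤ h z.1} with hSdef
  -- Measurability of R and S
  have hpair1 : Measurable (fun z : Z => (h z.1, h z.2)) :=
    (hmeas.comp measurable_fst).prodMk (hmeas.comp measurable_snd)
  have hpair2 : Measurable (fun z : Z => (h z.2, h z.1)) :=
    (hmeas.comp measurable_snd).prodMk (hmeas.comp measurable_fst)
  have hRm : MeasurableSet R := hpair1 hBorelOrder
  have hSm : MeasurableSet S := hpair2 hBorelOrder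
  have hRb : BaireMeasurableSet R := hRm.baireMeasurableSet
  have hSb : BaireMeasurableSet S := hSm.baireMeasurableSet
  -- R ∪ S = univ
  have hRS : ∀ z : Z, z ∈ R ∨ z ∈ S := fun z => le_total (h z.1) (h z.2)
  -- R ∩ S is contained in the meager set of E₀-pairs
  have hInt : R ∩ S ⊆ {z : Z | E0 z.1 z.2} := by
    rintro z ⟨h1, h2⟩
    exact hfib _ _ (le_antisymm h1 h2)
  -- swap homeomorphism
  set sw : Z ≃ₜ Z := Homeomorph.prodComm X X with hsw
  have hswS : sw ⁻¹' S = R := by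
    ext z
    simp [hsw, hRdef, hSdef, Homeomorph.prodComm]
  have hswR : sw ⁻¹' R = S := by
    ext z
    simp [hsw, hRdef, hSdef, Homeomorph.prodComm]
  have hresid : Filter.Tendsto sw (residual Z) (residual Z) :=
    tendsto_residual_of_isOpenMap sw.continuous sw.isOpenMap
  -- neither R nor S is meager
  have not_both : ∀ A : Set Z, A ∈ residual Z → Aᶜ ∈ residual Z → False := by
    intro A h1 h2
    have : A ∩ Aᶜ ∈ residual Z := inter_mem h1 h2
    rw [Set.inter_compl_self] at this
    obtain ⟨z, hz⟩ := (dense_of_mem_residual this).nonempty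
    exact hz
  have hRnm : ¬IsMeagre R := by
    intro hmR
    have hScompl : Sᶜ ⊆ R := fun z hz => (hRS z).resolve_right hz
    have hSres : S ∈ residual Z := by
      have : IsMeagre Sᶜ := hmR.mono hScompl
      rw [IsMeagre, compl_compl] at this
      exact this
    have hRres : R ∈ residual Z := by
      rw [← hswS]
      exact hresid hSres
    exact not_both R hRres hmR
  have hSnm : ¬IsMeagre S := by
    intro hmS
    have hRcompl : Rᶜ ⊆ S := fun z hz => (hRS z).resolve_left hz
    have hRres : R ∈ residual Z := by
      have : IsMeagre Rᶜ := hmS.mono hRcompl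
      rw [IsMeagre, compl_compl] at this
      exact this
    have hSres : S ∈ residual Z := by
      rw [← hswR]
      exact hresid hRres
    exact not_both S hSres hmS
  -- localize: R and S are each comeager in some box
  obtain ⟨t₀, s₀, n₀, hR0⟩ := exists_box_comeager hRb hRnm
  obtain ⟨t₁, s₁, n₁, hS0⟩ := exists_box_comeager hSb hSnm
  -- the common box
  set N : ℕ := max n₀ n₁ with hN
  have hn₀N : n₀ ≤ N := le_max_left _ _
  have hn₁N : n₁ ≤ N := le_max_right _ _
  set tP : X := fun k => if k < n₀ then t₀ k else true with htP
  set sStar : X := fun k => if k < n₀ then s₀ k else false with hsStar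
  set T : X := fun k => if k < n₁ then t₁ k else false with hT
  set sP : X := fun k => if k < n₁ then s₁ k else true with hsP
  -- R-side: shrink to sub-box, then transfer the first coordinate down
  have hR1 : IsMeagre ((cyl tP (N + 1) ×ˢ cyl sStar (N + 1)) \ R) := by
    apply hR0.mono
    apply Set.diff_subset_diff_left
    apply Set.prod_mono
    · exact cyl_subset (le_trans hn₀N (Nat.le_succ N)) fun k hk => by simp [htP, hk]
    · exact cyl_subset (le_trans hn₀N (Nat.le_succ N)) fun k hk => by simp [hsStar, hk]
  have hRdc : ∀ b b' x, le0 b' b → (b, x) ∈ R → (b', x) ∈ R := by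
    intro b b' x hle hbx
    exact le_trans (hhop b' b hle) hbx
  have htPN : tP N = true := by simp [htP, Nat.not_lt.mpr hn₀N]
  have hTN : T N = false := by simp [hT, Nat.not_lt.mpr hn₁N]
  have hR2 : IsMeagre ((cyl T (N + 1) ×ˢ cyl sStar (N + 1)) \ R) :=
    transfer_fst hRdc htPN hTN hR1
  -- S-side: shrink to sub-box, then transfer the second coordinate down
  have hS1 : IsMeagre ((cyl T (N + 1) ×ˢ cyl sP (N + 1)) \ S) := by
    apply hS0.mono
    apply Set.diff_subset_diff_left
    apply Set.prod_mono
    · exact cyl_subset (le_trans hn₁N (Nat.le_succ N)) fun k hk => by simp [hT, hk]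
    · exact cyl_subset (le_trans hn₁N (Nat.le_succ N)) fun k hk => by simp [hsP, hk]
  have hSdc : ∀ b x x', le0 x' x → (b, x) ∈ S → (b, x') ∈ S := by
    intro b x x' hle hbx
    exact le_trans (hhop x' x hle) hbx
  have hsPN : sP N = true := by simp [hsP, Nat.not_lt.mpr hn₁N]
  have hsStarN : sStar N = false := by simp [hsStar, Nat.not_lt.mpr hn₀N]
  have hS2 : IsMeagre ((cyl T (N + 1) ×ˢ cyl sStar (N + 1)) \ S) :=
    transfer_snd hSdc hsPN hsStarN hS1
  -- combine: the common box is meager, contradiction with Baire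
  set B : Set Z := cyl T (N + 1) ×ˢ cyl sStar (N + 1) with hB
  have hBopen : IsOpen B := (isOpen_cyl T (N + 1)).prod (isOpen_cyl sStar (N + 1))
  have hBne : B.Nonempty := ⟨(T, sStar), self_mem_cyl _ _, self_mem_cyl _ _⟩
  have hBmeager : IsMeagre B := by
    have hsub : B ⊆ ((B \ R) ∪ (B \ S)) ∪ {z : Z | E0 z.1 z.2} := by
      intro z hz
      by_cases hzR : z ∈ R
      · by_cases hzS : z ∈ S
        · exact Or.inr (hInt ⟨hzR, hzS⟩)
        · exact Or.inl (Or.inr ⟨hz, hzS⟩)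
      · exact Or.inl (Or.inl ⟨hz, hzR⟩)
    exact ((IsMeagre.union' (IsMeagre.union' hR2 hS2) isMeagre_E0pairs)).mono hsub
  have hdenseBc : Dense Bᶜ := dense_of_mem_residual hBmeager
  obtain ⟨z, hzB, hzBc⟩ := hdenseBc.inter_open_nonempty B hBopen hBne
  exact hzBc hzB
end

section
/- Fusion lemma for the square of Cohen forcing: given a sequence ⟨D_n : n ∈ ℕ⟩ of dense open subsets of 2^{<ω} × 2^{<ω} (with the coordinatewise extension order), there exist finite binary strings u_n, v_n ∈ 2^{l(n)} (all of equal length l(n) for each n) such that for every n and all u, v ∈ 2^l where l = n + Σ_{m<n} l(m), the pairs ⟨u⌢u_n, v⌢v_n⟩ and ⟨u⌢v_n, v⌢u_n⟩ belong to D_n. -/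
/-- Coordinatewise end-extension order on pairs of finite binary strings. -/
def ext2 (p q : List Bool × List Bool) : Prop := p.1 <+: q.1 ∧ p.2 <+: q.2

/-- All binary lists of length `n`. -/
def allB : ℕ → List (List Bool)
  | 0 => [[]]
  | n + 1 => (allB n).flatMap fun l => [false :: l, true :: l]

lemma mem_allB : ∀ s : List Bool, s ∈ allB s.length := by
  intro s
  induction s with
  | nil => simp [allB]
  | cons b rest ih =>
    simp only [List.length_cons, allB, List.mem_flatMap]
    exact ⟨rest, ih, by cases b <;> simp⟩

lemma prefix_append_left {l u v : List Bool} (h : u <+: v) : l ++ u <+: l ++ v := by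
  obtain ⟨t, rfl⟩ := h; exact ⟨t, List.append_assoc ..⟩

lemma ext2_append {s t u v u' v' : List Bool} (hu : u <+: u') (hv : v <+: v') :
    ext2 (s ++ u, t ++ v) (s ++ u', t ++ v') :=
  ⟨prefix_append_left hu, prefix_append_left hv⟩

lemma pad (u v : List Bool) :
    ∃ u' v' : List Bool, u <+: u' ∧ v <+: v' ∧ u'.length = v'.length := by
  refine ⟨u ++ List.replicate (max u.length v.length - u.length) false,
          v ++ List.replicate (max u.length v.length - v.length) false,
          List.prefix_append _ _, List.prefix_append _ _, ?_⟩
  simp only [List.length_append, List.length_replicate]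
  omega

lemma step (D : Set (List Bool × List Bool))
    (hdense : ∀ p, ∃ q ∈ D, ext2 p q)
    (hopen : ∀ p ∈ D, ∀ q, ext2 p q → q ∈ D)
    (conds : List (List Bool × List Bool × Bool)) :
    ∃ u v : List Bool, u.length = v.length ∧
      ∀ c ∈ conds,
        (if c.2.2 then (c.1 ++ v, c.2.1 ++ u) else (c.1 ++ u, c.2.1 ++ v)) ∈ D := by
  induction conds with
  | nil => exact ⟨[], [], rfl, by simp⟩
  | cons c rest ih =>
    obtain ⟨u, v, hlen, hmem⟩ := ih
    obtain ⟨s, t, b⟩ := c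
    cases b with
    | false =>
      obtain ⟨⟨a, a'⟩, hq, ⟨x, hx⟩, ⟨y, hy⟩⟩ := hdense (s ++ u, t ++ v)
      obtain ⟨u', v', hu', hv', hlen'⟩ := pad (u ++ x) (v ++ y)
      have hu2 : u <+: u' := (List.prefix_append u x).trans hu'
      have hv2 : v <+: v' := (List.prefix_append v y).trans hv'
      refine ⟨u', v', hlen', ?_⟩
      intro c hc
      rcases List.mem_cons.1 hc with h | h
      · subst h
        simp only [Bool.false_eq_true, if_false]
        refine hopen _ hq _ ⟨?_, ?_⟩
        · rw [← hx, List.append_assoc]; exact prefix_append_left hu'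
        · rw [← hy, List.append_assoc]; exact prefix_append_left hv'
      · have := hmem c h
        split at this <;> simp_all only [if_true, if_false] <;>
          [exact hopen _ this _ (ext2_append hv2 hu2);
           exact hopen _ this _ (ext2_append hu2 hv2)]
    | true =>
      obtain ⟨⟨a, a'⟩, hq, ⟨y, hy⟩, ⟨x, hx⟩⟩ := hdense (s ++ v, t ++ u)
      obtain ⟨u', v', hu', hv', hlen'⟩ := pad (u ++ x) (v ++ y)
      have hu2 : u <+: u' := (List.prefix_append u x).trans hu'
      have hv2 : v <+: v' := (List.prefix_append v y).trans hv'
      refine ⟨u', v', hlen', ?_⟩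
      intro c hc
      rcases List.mem_cons.1 hc with h | h
      · subst h
        simp only [if_true]
        refine hopen _ hq _ ⟨?_, ?_⟩
        · rw [← hy, List.append_assoc]; exact prefix_append_left hv'
        · rw [← hx, List.append_assoc]; exact prefix_append_left hu'
      · have := hmem c h
        split at this <;> simp_all only [if_true, if_false] <;>
          [exact hopen _ this _ (ext2_append hv2 hu2);
           exact hopen _ this _ (ext2_append hu2 hv2)]

lemma key (D : Set (List Bool × List Bool))
    (hdense : ∀ p, ∃ q ∈ D, ext2 p q)
    (hopen : ∀ p ∈ D, ∀ q, ext2 p q → q ∈ D) (L : ℕ) :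
    ∃ u v : List Bool, u.length = v.length ∧
      ∀ s t : List Bool, s.length = L → t.length = L →
        (s ++ u, t ++ v) ∈ D ∧ (s ++ v, t ++ u) ∈ D := by
  obtain ⟨u, v, hlen, hmem⟩ := step D hdense hopen
    ((allB L).flatMap fun s => (allB L).flatMap fun t => [(s, t, false), (s, t, true)])
  refine ⟨u, v, hlen, fun s t hs ht => ?_⟩
  have hs' : s ∈ allB L := hs ▸ mem_allB s
  have ht' : t ∈ allB L := ht ▸ mem_allB t
  have h1 := hmem (s, t, false) (by simp only [List.mem_flatMap]; exact ⟨s, hs', t, ht', by simp⟩)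
  have h2 := hmem (s, t, true) (by simp only [List.mem_flatMap]; exact ⟨s, hs', t, ht', by simp⟩)
  simp only [if_true, Bool.false_eq_true, if_false] at h1 h2
  exact ⟨h1, h2⟩

/-- Fusion lemma for the square of Cohen forcing: given dense open sets
`D n ⊆ 2^{<ω} × 2^{<ω}`, there are strings `u n, v n` of common length
`l n` such that for all `u, v` of length `l = n + Σ_{m<n} l m`, the pairs
`⟨u⌢uₙ, v⌢vₙ⟩` and `⟨u⌢vₙ, v⌢uₙ⟩` lie in `D n`. -/
theorem cohen_square_fusion (D : ℕ → Set (List Bool × List Bool))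
    (hdense : ∀ n, ∀ p, ∃ q ∈ D n, ext2 p q)
    (hopen : ∀ n, ∀ p ∈ D n, ∀ q, ext2 p q → q ∈ D n) :
    ∃ (l : ℕ → ℕ) (u v : ℕ → List Bool),
      (∀ n, (u n).length = l n) ∧ (∀ n, (v n).length = l n) ∧
      ∀ n, ∀ s t : List Bool,
        s.length = n + (Finset.range n).sum l →
        t.length = n + (Finset.range n).sum l →
        (s ++ u n, t ++ v n) ∈ D n ∧ (s ++ v n, t ++ u n) ∈ D n := by
  choose U V hlen hmem using fun n L => key (D n) (hdense n) (hopen n) L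
  set F : ℕ → ℕ := fun n => Nat.rec 0 (fun k ih => ih + 1 + (U k ih).length) n with hF
  set l : ℕ → ℕ := fun n => (U n (F n)).length with hl
  have hFl : ∀ n, F n = n + (Finset.range n).sum l := by
    intro n
    induction n with
    | zero => rfl
    | succ k ih =>
      have h1 : F (k + 1) = F k + 1 + l k := rfl
      have h2 : (Finset.range (k + 1)).sum l = (Finset.range k).sum l + l k :=
        Finset.sum_range_succ l k
      rw [h1, ih, h2]
      omega
  refine ⟨l, fun n => U n (F n), fun n => V n (F n), fun n => rfl,
    fun n => (hlen n (F n)).symm, fun n s t hs ht => ?_⟩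
  exact hmem n (F n) s t (by rw [hFl n]; exact hs) (by rw [hFl n]; exact ht)
end

section
/- With u_n, v_n ∈ 2^{l(n)} as in the fusion lemma, define G : 2^ω → 2^ω by G(a) = w₀⌢w₁⌢w₂⌢…, where w_n = u_n⌢0 if a(n) = 0 and w_n = v_n⌢1 if a(n) = 1. Then G is continuous and injective, and moreover a E₀ b implies G(a) E₀ G(b), and ¬(a E₀ b) implies ¬(G(a) E₀ G(b)). -/
/-- The `n`-th block of `G(a)`: `uₙ⌢0` if `a n = 0` and `vₙ⌢1` if `a n = 1`. -/
def block (u v : ℕ → List Bool) (a : ℕ → Bool) (n : ℕ) : List Bool :=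
  if a n then v n ++ [true] else u n ++ [false]

/-- `G(a) = w₀⌢w₁⌢w₂⌢…`, the infinite concatenation of the blocks
(the value at position `k` is already determined by the first `k+1` blocks,
since every block is nonempty). -/
def G (u v : ℕ → List Bool) (a : ℕ → Bool) (k : ℕ) : Bool :=
  ((List.ofFn (fun i : Fin (k + 1) => block u v a i)).flatten).getD k false

def partLen (l : ℕ → ℕ) (m : ℕ) : ℕ := ∑ i ∈ Finset.range m, (l i + 1)

lemma partLen_succ (l : ℕ → ℕ) (m : ℕ) :
    partLen l (m + 1) = partLen l m + (l m + 1) := by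
  simp [partLen, Finset.sum_range_succ]

lemma partLen_le (l : ℕ → ℕ) (m : ℕ) : m ≤ partLen l m := by
  induction m with
  | zero => simp [partLen]
  | succ m ih => rw [partLen_succ]; omega

lemma partLen_mono (l : ℕ → ℕ) : Monotone (partLen l) :=
  fun _ _ h => Finset.sum_le_sum_of_subset (Finset.range_subset_range.2 h)

section
variable (u v : ℕ → List Bool) (l : ℕ → ℕ) (a b : ℕ → Bool)

lemma block_length (hu : ∀ n, (u n).length = l n) (hv : ∀ n, (v n).length = l n)
    (n : ℕ) : (block u v a n).length = l n + 1 := by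
  unfold block; cases a n <;> simp [hu, hv]

lemma flatten_length (hu : ∀ n, (u n).length = l n) (hv : ∀ n, (v n).length = l n) (m : ℕ) :
    ((List.ofFn fun i : Fin m => block u v a i).flatten).length = partLen l m := by
  rw [List.length_flatten, List.map_ofFn, List.sum_ofFn, Function.comp_def,
    Fin.sum_univ_eq_sum_range fun i => (block u v a i).length]
  exact Finset.sum_congr rfl fun i _ => block_length u v l a hu hv i

lemma flatten_succ (m : ℕ) :
    (List.ofFn fun i : Fin (m+1) => block u v a i).flatten =
    (List.ofFn fun i : Fin m => block u v a i).flatten ++ block u v a m := by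
  rw [List.ofFn_succ']
  simp [List.concat_eq_append, List.flatten_append]

end

section
variable (u v : ℕ → List Bool) (l : ℕ → ℕ) (a b : ℕ → Bool)
variable (hu : ∀ n, (u n).length = l n) (hv : ∀ n, (v n).length = l n)
include hu hv

lemma getD_stable {k m m' : ℕ} (hk : k < partLen l m) (hm : m ≤ m') :
    ((List.ofFn fun i : Fin m' => block u v a i).flatten).getD k false =
    ((List.ofFn fun i : Fin m => block u v a i).flatten).getD k false := by
  induction m' with
  | zero => have h0 : m = 0 := Nat.le_zero.1 hm; subst h0; rfl
  | succ m' ih =>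
    rcases Nat.lt_or_ge m (m' + 1) with h' | h'
    · have hm' : m ≤ m' := by omega
      rw [flatten_succ, List.getD_append, ih hm']
      rw [flatten_length u v l a hu hv]
      exact lt_of_lt_of_le hk (partLen_mono l hm')
    · have : m = m' + 1 := by omega
      subst this; rfl

lemma G_eq_flatten {k m : ℕ} (hk : k < partLen l m) :
    G u v a k = ((List.ofFn fun i : Fin m => block u v a i).flatten).getD k false := by
  have h1 : k < partLen l (k + 1) := lt_of_lt_of_le (by omega) (partLen_le l (k + 1))
  unfold G
  rcases Nat.le_total (k + 1) m with h | h
  · exact (getD_stable u v l a hu hv h1 h).symm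
  · exact getD_stable u v l a hu hv hk h

lemma G_block {n j : ℕ} (hj : j ≤ l n) :
    G u v a (partLen l n + j) = (block u v a n).getD j false := by
  have hk : partLen l n + j < partLen l (n + 1) := by rw [partLen_succ]; omega
  rw [G_eq_flatten u v l a hu hv hk, flatten_succ]
  have hlen : ((List.ofFn fun i : Fin n => block u v a i).flatten).length = partLen l n :=
    flatten_length u v l a hu hv n
  rw [List.getD_eq_getElem?_getD, List.getElem?_append_right (by omega),
    hlen, Nat.add_sub_cancel_left, ← List.getD_eq_getElem?_getD]

lemma G_last (n : ℕ) : G u v a (partLen l n + l n) = a n := by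
  rw [G_block u v l a hu hv (le_refl (l n))]
  cases h : a n <;>
    simp [block, h, List.getD_eq_getElem?_getD, List.getElem?_append_right, hu n, hv n]

end

lemma decompose (l : ℕ → ℕ) (k : ℕ) : ∃ n j, j ≤ l n ∧ k = partLen l n + j := by
  classical
  let P : ℕ → Prop := fun n => partLen l n ≤ k
  have hP0 : P 0 := by simp [P, partLen]
  have hle : partLen l (Nat.findGreatest P k) ≤ k :=
    Nat.findGreatest_spec (P := P) (Nat.zero_le k) hP0
  set n := Nat.findGreatest P k with hn
  have hlt : k < partLen l (n + 1) := by
    by_contra hc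
    push_neg at hc
    have hb : n + 1 ≤ k := le_trans (partLen_le l (n + 1)) hc
    exact Nat.findGreatest_is_greatest (P := P) (Nat.lt_succ_self n) hb hc
  rw [partLen_succ] at hlt
  exact ⟨n, k - partLen l n, by omega, by omega⟩


/-- With `uₙ, vₙ` of common length `l n` as in the fusion lemma, the map
`G` is continuous, injective, and preserves `E₀` and its negation. -/
theorem G_continuous_injective_E0_invariant (u v : ℕ → List Bool) (l : ℕ → ℕ)
    (hu : ∀ n, (u n).length = l n) (hv : ∀ n, (v n).length = l n) :
    Continuous (G u v) ∧ Function.Injective (G u v) ∧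
    (∀ a b, E0 a b → E0 (G u v a) (G u v b)) ∧
    (∀ a b, ¬ E0 a b → ¬ E0 (G u v a) (G u v b)) := by
  have hlast : ∀ a n, G u v a (partLen l n + l n) = a n := fun a n => G_last u v l a hu hv n
  have hneg : ∀ a b, E0 (G u v a) (G u v b) → E0 a b := by
    rintro a b ⟨m, hm⟩
    refine ⟨m, fun n hn => ?_⟩
    have h1 := hm (partLen l n + l n)
      (le_trans (le_trans hn (partLen_le l n)) (Nat.le_add_right _ _))
    rw [hlast a n, hlast b n] at h1
    exact h1
  refine ⟨?_, ?_, ?_, fun a b hab h => hab (hneg a b h)⟩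
  · refine continuous_pi fun k => ?_
    have hfac : (fun a => G u v a k) =
        (fun f : Fin (k + 1) → Bool =>
          ((List.ofFn (fun i : Fin (k + 1) =>
            if f i then v i ++ [true] else u i ++ [false])).flatten).getD k false) ∘
          (fun a (i : Fin (k + 1)) => a i) := rfl
    rw [hfac]
    exact continuous_of_discreteTopology.comp (continuous_pi fun i => continuous_apply _)
  · intro a b h
    funext n
    rw [← hlast a n, ← hlast b n, h]
  · rintro a b ⟨m, hm⟩
    refine ⟨partLen l m, fun k hk => ?_⟩
    obtain ⟨n, j, hj, rfl⟩ := decompose l k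
    have hnm : m ≤ n := by
      by_contra hc
      push_neg at hc
      have h1 : partLen l (n + 1) ≤ partLen l m := partLen_mono l hc
      rw [partLen_succ] at h1
      omega
    have hblock : block u v a n = block u v b n := by
      unfold block; rw [hm n hnm]
    rw [G_block u v l a hu hv hj, G_block u v l b hu hv hj, hblock]
end

section
/- Lusin separation: if P ⊆ ω^ω × ω^ω and Q ⊆ ω^ω × λ^ω (λ a countable ordinal with the discrete topology on λ) are closed sets whose projections X = {x : ∃y P(x,y)} and Y = {x : ∃f Q(x,f)} to the first coordinate are disjoint, then there is a Borel set B ⊆ ω^ω with X ⊆ B and Y ∩ B = ∅. -/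
open MeasureTheory

/-- Lusin separation: the projections of closed subsets of
`ω^ω × ω^ω` and of `ω^ω × Λ^ω` (`Λ` countable discrete), if disjoint,
can be separated by a Borel set. -/
theorem lusin_separation (Λ : Type) [TopologicalSpace Λ] [DiscreteTopology Λ]
    [Countable Λ]
    (P : Set ((ℕ → ℕ) × (ℕ → ℕ))) (Q : Set ((ℕ → ℕ) × (ℕ → Λ)))
    (hP : IsClosed P) (hQ : IsClosed Q)
    (hdisj : Disjoint {x | ∃ y, (x, y) ∈ P} {x | ∃ f, (x, f) ∈ Q}) :
    ∃ B : Set (ℕ → ℕ), MeasurableSet B ∧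
      {x | ∃ y, (x, y) ∈ P} ⊆ B ∧ {x | ∃ f, (x, f) ∈ Q} ∩ B = ∅ := by
  haveI : PolishSpace ((ℕ → ℕ) × (ℕ → ℕ)) := inferInstance
  haveI : PolishSpace ((ℕ → ℕ) × (ℕ → Λ)) := by
    haveI : PolishSpace Λ := inferInstance
    infer_instance
  have hX : AnalyticSet {x : ℕ → ℕ | ∃ y, (x, y) ∈ P} := by
    have h1 : {x : ℕ → ℕ | ∃ y, (x, y) ∈ P} = Prod.fst '' P := by
      ext x
      exact ⟨fun ⟨y, h⟩ => ⟨(x, y), h, rfl⟩, fun ⟨⟨a, b⟩, h, e⟩ => e ▸ ⟨b, h⟩⟩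
    rw [h1]
    exact hP.analyticSet.image_of_continuous continuous_fst
  have hY : AnalyticSet {x : ℕ → ℕ | ∃ f, (x, f) ∈ Q} := by
    have h1 : {x : ℕ → ℕ | ∃ f, (x, f) ∈ Q} = Prod.fst '' Q := by
      ext x
      exact ⟨fun ⟨y, h⟩ => ⟨(x, y), h, rfl⟩, fun ⟨⟨a, b⟩, h, e⟩ => e ▸ ⟨b, h⟩⟩
    rw [h1]
    exact hQ.analyticSet.image_of_continuous continuous_fst
  obtain ⟨u, hsu, hdu, hu⟩ := hX.measurablySeparable hY hdisj
  exact ⟨u, hu, hsu, Set.disjoint_iff_inter_eq_empty.1 hdu⟩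
end
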